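/- If π has exactly s successive lower-Durfee squares with sides d_1, d_2, ..., d_s from bottom to top, then d_i ≤ d_{i+1} for i = 1, ..., s-2. -/

import Mathlib

/-- The side of the Durfee square of a partition whose parts are listed in
weakly decreasing order `L`: the number of indices `i` with `L[i] ≥ i+1`. -/
def durfee (L : List ℕ) : ℕ :=
  ((Finset.range L.length).filter fun i => i + 1 ≤ L.getD i 0).card

theorem durfee_le (L : List ℕ) : durfee L ≤ L.length := by
  classical
  calc ((Finset.range L.length).filter fun i => i + 1 ≤ L.getD i 0).card
      ≤ (Finset.range L.length).card := Finset.card_filter_le _ _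
    _ = L.length := Finset.card_range _

/-- The sides of the successive Durfee squares (from the top) of a partition
whose parts are listed in weakly decreasing order. -/
def durfeeSides (L : List ℕ) : List ℕ :=
  if h : durfee L = 0 then [] else durfee L :: durfeeSides (L.drop (durfee L))
  termination_by L.length
  decreasing_by
    have h1 := durfee_le L
    simp only [List.length_drop]
    omega

/-- The sides of the successive lower-Durfee squares (from the bottom) of a
partition whose parts are listed in weakly *increasing* order `M`: the first
lower-Durfee square has side `min M.head M.length`, and one recurses on the
remaining (larger) parts. -/
def lowerSides (M : List ℕ) : List ℕ :=
  if h : min (M.headD 0) M.length = 0 then []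
  else min (M.headD 0) M.length :: lowerSides (M.drop (min (M.headD 0) M.length))
  termination_by M.length
  decreasing_by
    simp only [List.length_drop]
    omega

/-!
A lower-Durfee square of side `d = min m₁ n` (with `m₁` the smallest part and `n` the number
of parts still available) that is not the topmost one leaves parts above it, so `d < n` and
hence `d = m₁`. Thus for a side `dᵢ` followed by a side `dᵢ₊₁` that is not the last one,
`dᵢ ≤ m₁ ≤ m_{dᵢ+1} = dᵢ₊₁` because the parts increase upwards.
-/

theorem List.headD_le_headD_drop {α : Type*} [Preorder α] {l : List α} (hl : l.Pairwise (· ≤ ·))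
    (a : α) {n : ℕ} (hn : n < l.length) : l.headD a ≤ (l.drop n).headD a := by
  cases l with
  | nil => simp at hn
  | cons x l =>
    cases n with
    | zero => simp
    | succ k =>
      have hk : k < l.length := by simpa using hn
      simp only [List.drop_succ_cons, List.headD_eq_head?_getD, List.head?_drop,
        List.getElem?_eq_getElem hk, Option.getD_some]
      exact List.rel_of_pairwise_cons hl (List.getElem_mem hk)

@[simp] theorem lowerSides_nil : lowerSides [] = [] := by
  rw [lowerSides, dif_pos (by simp)]

theorem lowerSides_eq_cons {M : List ℕ} (h : lowerSides M ≠ []) :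
    lowerSides M = min (M.headD 0) M.length ::
      lowerSides (M.drop (min (M.headD 0) M.length)) := by
  rw [lowerSides, dif_neg]
  contrapose! h
  rw [lowerSides, dif_pos h]

theorem min_headD_length_lt_length {M : List ℕ} (h : 1 < (lowerSides M).length) :
    min (M.headD 0) M.length < M.length := by
  have hne : lowerSides M ≠ [] := List.ne_nil_of_length_pos (by omega)
  rw [lowerSides_eq_cons hne, List.length_cons] at h
  by_contra! hge
  rw [List.drop_eq_nil_of_le hge, lowerSides_nil] at h
  simp at h

theorem headD_lowerSides_of_one_lt_length {M : List ℕ} (h : 1 < (lowerSides M).length) :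
    (lowerSides M).headD 0 = M.headD 0 := by
  have hne : lowerSides M ≠ [] := List.ne_nil_of_length_pos (by omega)
  have hlt := min_headD_length_lt_length h
  rw [lowerSides_eq_cons hne, List.headD_cons]
  omega

theorem lowerSides_getD_zero_le_getD_one {M : List ℕ} (hM : M.Pairwise (· ≤ ·))
    (h : 2 < (lowerSides M).length) : (lowerSides M).getD 0 0 ≤ (lowerSides M).getD 1 0 := by
  have hne : lowerSides M ≠ [] := List.ne_nil_of_length_pos (by omega)
  have hd_lt := min_headD_length_lt_length (M := M) (by omega)
  rw [lowerSides_eq_cons hne] at h ⊢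
  set d := min (M.headD 0) M.length
  have hrest : 1 < (lowerSides (M.drop d)).length := by
    rw [List.length_cons] at h; omega
  calc d ≤ M.headD 0 := min_le_left _ _
    _ ≤ (M.drop d).headD 0 := M.headD_le_headD_drop hM 0 hd_lt
    _ = (lowerSides (M.drop d)).headD 0 := (headD_lowerSides_of_one_lt_length hrest).symm
    _ = _ := by cases lowerSides (M.drop d) <;> rfl

theorem lowerSides_getD_le_getD_succ {M : List ℕ} (hM : M.Pairwise (· ≤ ·)) {i : ℕ}
    (hi : i + 2 < (lowerSides M).length) :
    (lowerSides M).getD i 0 ≤ (lowerSides M).getD (i + 1) 0 := by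
  induction i generalizing M with
  | zero => exact lowerSides_getD_zero_le_getD_one hM hi
  | succ i ih =>
    have hne : lowerSides M ≠ [] := List.ne_nil_of_length_pos (by omega)
    rw [lowerSides_eq_cons hne, List.length_cons] at hi
    rw [lowerSides_eq_cons hne]
    exact ih hM.drop (by omega)

theorem lower_durfee_sides_mono_general (M : List ℕ) (hsort : M.Pairwise (· ≤ ·))
    (s : ℕ) (hs : (lowerSides M).length = s)
    (i : ℕ) (hi : i + 2 < s) :
    (lowerSides M).getD i 0 ≤ (lowerSides M).getD (i + 1) 0 :=
  lowerSides_getD_le_getD_succ hsort (hs ▸ hi)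

/-- If `π` (parts listed in weakly increasing order `M`, all positive) has
exactly `s` successive lower-Durfee squares with sides `d_1, …, d_s` from
bottom to top, then `d_i ≤ d_{i+1}` for `i = 1, …, s-2`. -/
theorem lower_durfee_sides_mono (M : List ℕ) (hsort : M.Pairwise (· ≤ ·))
    (hpos : ∀ x ∈ M, 1 ≤ x) (s : ℕ) (hs : (lowerSides M).length = s)
    (i : ℕ) (hi : i + 2 < s) :
    (lowerSides M).getD i 0 ≤ (lowerSides M).getD (i + 1) 0 :=
  lower_durfee_sides_mono_general M hsort s hs i hi
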